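/- Let (ξ_n)_{n≥0} be a Markov chain satisfying the uniform geometric ergodicity condition sup_x |∫P(n,x,dy)f(y) − ∫f dν| ≤ R e^{−ρn} sup|f|. Then for every starting point x, the chain is φ-mixing with φ_x(n) ≤ 2R e^{−ρn}, where φ_x(n) = sup_{m≥0} sup { |P_x(Γ∩Δ)/P_x(Γ) − P_x(Δ)| : Γ ∈ F_{0,m}, Δ ∈ F_{m+n,∞}, P_x(Γ) > 0 }. -/

import Mathlib

open Matrix MeasureTheory Filter

noncomputable def opNorm {n : Type*} [Fintype n] [DecidableEq n] (A : Matrix n n ℝ) : ℝ :=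
  ‖Matrix.toEuclideanCLM (𝕜 := ℝ) A‖

noncomputable def topSingVal {n : Type*} [Fintype n] [DecidableEq n] (A : Matrix n n ℝ) : ℝ :=
  ⨆ i, Real.sqrt ((Matrix.isHermitian_conjTranspose_mul_self A).eigenvalues i)

noncomputable def singVals {d : ℕ} (A : Matrix (Fin d) (Fin d) ℝ) : Fin d → ℝ := fun i =>
  let f : Fin d → ℝ := fun j =>
    Real.sqrt ((Matrix.isHermitian_conjTranspose_mul_self A).eigenvalues j)
  (f ∘ Tuple.sort f) i.rev

noncomputable def compound {d : ℕ} (k : ℕ) (A : Matrix (Fin d) (Fin d) ℝ) :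
    Matrix {s : Finset (Fin d) // s.card = k} {s : Finset (Fin d) // s.card = k} ℝ :=
  Matrix.of fun S T =>
    (A.submatrix (fun i => (S.1.orderIsoOfFin S.2 i : Fin d))
      (fun j => (T.1.orderIsoOfFin T.2 j : Fin d))).det

noncomputable def prodDesc {d : ℕ} (X : ℕ → Matrix (Fin d) (Fin d) ℝ) (a b : ℕ) :
    Matrix (Fin d) (Fin d) ℝ :=
  (((List.range' a (b + 1 - a)).map X).reverse).prod

instance matrixMeasurableSpace {m n : Type*} : MeasurableSpace (Matrix m n ℝ) :=
  inferInstanceAs (MeasurableSpace (m → n → ℝ))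

open ProbabilityTheory

noncomputable def iterKernel {E : Type*} [MeasurableSpace E]
    (P : Kernel E E) : ℕ → Kernel E E
  | 0 => Kernel.id
  | n + 1 => P ∘ₖ iterKernel P n

/-- The σ-algebra on path space generated by the coordinates with indices in [m, n]. -/
def pathSeg (E : Type*) [MeasurableSpace E] (m n : ℕ) : MeasurableSpace (ℕ → E) :=
  ⨆ k ∈ Set.Icc m n, MeasurableSpace.comap (fun ω : ℕ → E => ω k) inferInstance

/-- The σ-algebra on path space generated by the coordinates with indices in [m, ∞). -/
def pathTail (E : Type*) [MeasurableSpace E] (m : ℕ) : MeasurableSpace (ℕ → E) :=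
  ⨆ k ∈ Set.Ici m, MeasurableSpace.comap (fun ω : ℕ → E => ω k) inferInstance

/-!
Fix `Δ ∈ F_{m+n,∞}`. On cylinder sets the Markov property can be iterated explicitly, and a
Dynkin-system argument extends this to a measurable `h : E → [0, 1]` with
`P_x(B ∩ Δ) = E_x[h(ξ_{m+n}); B]` for all `B ∈ F_{0,m+n}`. Iterating the Markov property `n`
more times gives `P_x(Γ ∩ Δ) = E_x[(Pⁿh)(ξ_m); Γ]`, and uniform ergodicity puts `Pⁿh` uniformly
within `R e^{-ρn}` of `c = ∫ h dν`. Hence both `P_x(Γ ∩ Δ) / P_x(Γ)` and `P_x(Δ)` (take `Γ` the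
whole space) lie within `R e^{-ρn}` of `c`.
-/

open scoped ENNReal

lemma abs_div_sub_le_two_mul {a b c d ε : ℝ} (hb : 0 < b) (habc : |a - c * b| ≤ ε * b)
    (hdc : |d - c| ≤ ε) : |a / b - d| ≤ 2 * ε := by
  have : |a / b - c| ≤ ε := by
    rwa [show a / b - c = (a - c * b) / b by field_simp, abs_div, abs_of_pos hb, div_le_iff₀ hb]
  calc |a / b - d| ≤ |a / b - c| + |c - d| := abs_sub_le _ _ _
    _ ≤ 2 * ε := by rw [abs_sub_comm c d]; linarith

lemma abs_setIntegral_sub_mul_measureReal_le {α : Type*} [MeasurableSpace α] {μ : Measure α}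
    [IsFiniteMeasure μ] {g : α → ℝ} (hg : AEStronglyMeasurable g μ) {c ε : ℝ}
    (hgc : ∀ x, |g x - c| ≤ ε) (B : Set α) :
    |∫ x in B, g x ∂μ - c * μ.real B| ≤ ε * μ.real B := by
  have hint : Integrable g μ := .of_bound hg (|c| + ε) (ae_of_all _ fun x => by
    linarith [abs_sub_abs_le_abs_sub (g x) c, hgc x, Real.norm_eq_abs (g x)])
  calc |∫ x in B, g x ∂μ - c * μ.real B| = ‖∫ x in B, (g x - c) ∂μ‖ := by
        rw [integral_sub hint.integrableOn (integrable_const c), setIntegral_const, smul_eq_mul,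
          mul_comm, Real.norm_eq_abs]
    _ ≤ ε * μ.real B := norm_setIntegral_le_of_norm_le_const (measure_lt_top μ B) fun x _ => hgc x

lemma setOf_forall_coord_add_mem_eq {E : Type*} (s : ℕ) (A : ℕ → Set E) :
    {ω : ℕ → E | ∀ i, ω (s + i) ∈ A i} =
      (fun ω => ω s) ⁻¹' A 0 ∩ {ω | ∀ i, ω (s + 1 + i) ∈ A (i + 1)} := by
  ext ω
  rw [Set.mem_ofPred_eq, ← Nat.and_forall_add_one]
  simp only [add_zero, add_right_comm s 1, ← add_assoc]
  rfl

section

variable {E : Type*} [MeasurableSpace E]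

lemma setLIntegral_indicator_comp {Ω : Type*} [MeasurableSpace Ω] {μ : Measure Ω} {X : Ω → E}
    (hX : Measurable X) {A : Set E} (hA : MeasurableSet A) (F : E → ℝ≥0∞) (B : Set Ω) :
    ∫⁻ ω in B, A.indicator F (X ω) ∂μ = ∫⁻ ω in B ∩ X ⁻¹' A, F (X ω) ∂μ := by
  simp_rw [← Set.indicator_comp_right]
  rw [lintegral_indicator (hX hA), Measure.restrict_restrict (hX hA), Set.inter_comm]
  rfl

lemma ae_comp_le_one_of_measure_inter_eq {Ω : Type*} [MeasurableSpace Ω] {μ : Measure Ω}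
    [IsFiniteMeasure μ] {X : Ω → E} (hX : Measurable X) {Δ : Set Ω} {h : E → ℝ≥0∞}
    (hh : Measurable h)
    (hΔh : ∀ A, MeasurableSet A → μ (X ⁻¹' A ∩ Δ) = ∫⁻ ω in X ⁻¹' A, h (X ω) ∂μ) :
    ∀ᵐ ω ∂μ, h (X ω) ≤ 1 := by
  refine ae_of_ae_map hX.aemeasurable
    (ae_le_of_forall_setLIntegral_le_of_sigmaFinite (μ := μ.map X) (g := fun _ => 1) hh
    fun A hA _ => ?_)
  rw [setLIntegral_map hA hh hX, ← hΔh A hA, setLIntegral_const, one_mul, Measure.map_apply hX hA]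
  exact measure_mono Set.inter_subset_left

lemma pathSeg_le_pi (a b : ℕ) : pathSeg E a b ≤ MeasurableSpace.pi :=
  iSup₂_le fun k _ => (measurable_pi_apply k).comap_le

lemma pathTail_le_pi (a : ℕ) : pathTail E a ≤ MeasurableSpace.pi :=
  iSup₂_le fun k _ => (measurable_pi_apply k).comap_le

lemma pathSeg_mono {a b b' : ℕ} (h : b ≤ b') : pathSeg E a b ≤ pathSeg E a b' :=
  biSup_mono fun _ hk => ⟨hk.1, hk.2.trans h⟩

lemma measurableSet_pathSeg_coord {a b k : ℕ} (hk : k ∈ Set.Icc a b) {A : Set E}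
    (hA : MeasurableSet A) : MeasurableSet[pathSeg E a b] {ω : ℕ → E | ω k ∈ A} :=
  le_iSup₂ (f := fun k (_ : k ∈ Set.Icc a b) =>
    MeasurableSpace.comap (fun ω : ℕ → E => ω k) inferInstance) k hk _ ⟨A, hA, rfl⟩

lemma measurableSet_pathTail_coord {a k : ℕ} (hk : a ≤ k) {A : Set E}
    (hA : MeasurableSet A) : MeasurableSet[pathTail E a] {ω : ℕ → E | ω k ∈ A} :=
  le_iSup₂ (f := fun k (_ : k ∈ Set.Ici a) =>
    MeasurableSpace.comap (fun ω : ℕ → E => ω k) inferInstance) k hk _ ⟨A, hA, rfl⟩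

def tailCylinders (E : Type*) [MeasurableSpace E] (m : ℕ) : Set (Set (ℕ → E)) :=
  {Δ | ∃ A : ℕ → Set E, (∀ i, MeasurableSet (A i)) ∧ (∀ᶠ i in atTop, A i = Set.univ) ∧
    Δ = {ω | ∀ i, ω (m + i) ∈ A i}}

lemma isPiSystem_tailCylinders (m : ℕ) : IsPiSystem (tailCylinders E m) := by
  rintro _ ⟨A, hA, hA_univ, rfl⟩ _ ⟨A', hA', hA'_univ, rfl⟩ -
  refine ⟨fun i => A i ∩ A' i, fun i => (hA i).inter (hA' i), ?_, ?_⟩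
  · filter_upwards [hA_univ, hA'_univ] with i h h'
    rw [h, h', Set.inter_self]
  · ext ω
    simp only [Set.mem_inter_iff, Set.mem_ofPred_eq, forall_and]

lemma generateFrom_tailCylinders (m : ℕ) :
    MeasurableSpace.generateFrom (tailCylinders E m) = pathTail E m := by
  apply le_antisymm
  · refine MeasurableSpace.generateFrom_le ?_
    rintro _ ⟨A, hA, -, rfl⟩
    simp only [Set.ofPred_forall]
    exact MeasurableSet.iInter fun i =>
      measurableSet_pathTail_coord (Nat.le_add_right m i) (hA i)
  · refine iSup₂_le fun k (hk : m ≤ k) => ?_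
    rintro _ ⟨C, hC, rfl⟩
    refine MeasurableSpace.measurableSet_generateFrom
      ⟨fun i => if i = k - m then C else Set.univ, fun i => ?_, ?_, ?_⟩
    · dsimp only
      split_ifs
      exacts [hC, MeasurableSet.univ]
    · filter_upwards [eventually_gt_atTop (k - m)] with i hi
      rw [if_neg hi.ne']
    · ext ω
      simp only [Set.mem_preimage, Set.mem_ofPred_eq, Set.mem_ite_univ_right, forall_eq,
        Nat.add_sub_cancel' hk]

instance iterKernel.instIsMarkovKernel (P : Kernel E E) [IsMarkovKernel P] (n : ℕ) :
    IsMarkovKernel (iterKernel P n) := by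
  induction n with
  | zero => rw [iterKernel]; infer_instance
  | succ n ih => rw [iterKernel]; infer_instance

lemma iterKernel_one (P : Kernel E E) : iterKernel P 1 = P :=
  Kernel.comp_id P

-- The probability that the chain started at `y` visits `A 0, …, A j` at times `0, …, j`.
noncomputable def cylinderProb (P : Kernel E E) : ℕ → (ℕ → Set E) → E → ℝ≥0∞
  | 0, A => (A 0).indicator 1
  | j + 1, A => (A 0).indicator fun y => ∫⁻ z, cylinderProb P j (fun i => A (i + 1)) z ∂(P y)

lemma measurable_cylinderProb (P : Kernel E E) (j : ℕ) {A : ℕ → Set E}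
    (hA : ∀ i, MeasurableSet (A i)) : Measurable (cylinderProb P j A) := by
  induction j generalizing A with
  | zero => exact measurable_one.indicator (hA 0)
  | succ j ih => exact (ih fun i => hA (i + 1)).lintegral_kernel.indicator (hA 0)

def HasMarkovProperty (P : Kernel E E) (μ : Measure (ℕ → E)) : Prop :=
  ∀ n : ℕ, ∀ B : Set (ℕ → E), MeasurableSet[pathSeg E 0 n] B → ∀ A : Set E, MeasurableSet A →
    μ (B ∩ {ω | ω (n + 1) ∈ A}) = ∫⁻ ω in B, P (ω n) A ∂μ

namespace HasMarkovProperty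

variable {P : Kernel E E} {μ : Measure (ℕ → E)}

lemma map_restrict_coord_succ (hμ : HasMarkovProperty P μ) {n : ℕ} {B : Set (ℕ → E)}
    (hB : MeasurableSet[pathSeg E 0 n] B) :
    (μ.restrict B).map (fun ω => ω (n + 1)) = P ∘ₘ (μ.restrict B).map (fun ω => ω n) := by
  ext A hA
  rw [Measure.map_apply (measurable_pi_apply _) hA,
    Measure.restrict_apply (measurable_pi_apply _ hA), Measure.bind_apply hA P.aemeasurable,
    lintegral_map (P.measurable_coe hA) (measurable_pi_apply _), Set.inter_comm]
  exact hμ n B hB A hA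

lemma map_restrict_coord_add (hμ : HasMarkovProperty P μ) (k : ℕ) {s : ℕ} {B : Set (ℕ → E)}
    (hB : MeasurableSet[pathSeg E 0 s] B) :
    (μ.restrict B).map (fun ω => ω (s + k)) =
      iterKernel P k ∘ₘ (μ.restrict B).map (fun ω => ω s) := by
  induction k with
  | zero => simp [iterKernel]
  | succ k ih =>
    rw [← add_assoc, map_restrict_coord_succ hμ (pathSeg_mono (Nat.le_add_right s k) B hB), ih,
      Measure.comp_assoc]
    rfl

lemma setLIntegral_coord_add (hμ : HasMarkovProperty P μ) (k : ℕ) {s : ℕ} {B : Set (ℕ → E)}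
    (hB : MeasurableSet[pathSeg E 0 s] B) {f : E → ℝ≥0∞} (hf : Measurable f) :
    ∫⁻ ω in B, f (ω (s + k)) ∂μ = ∫⁻ ω in B, ∫⁻ y, f y ∂(iterKernel P k (ω s)) ∂μ := by
  rw [← lintegral_map hf (measurable_pi_apply _), map_restrict_coord_add hμ k hB,
    Measure.lintegral_bind (Kernel.aemeasurable _) hf.aemeasurable,
    lintegral_map hf.lintegral_kernel (measurable_pi_apply _)]

lemma measure_inter_cylinder (hμ : HasMarkovProperty P μ) (j : ℕ)
    {A : ℕ → Set E} (hA : ∀ i, MeasurableSet (A i)) (hA_univ : ∀ i, j < i → A i = Set.univ)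
    {s : ℕ} {B : Set (ℕ → E)} (hB : MeasurableSet[pathSeg E 0 s] B) :
    μ (B ∩ {ω | ∀ i, ω (s + i) ∈ A i}) = ∫⁻ ω in B, cylinderProb P j A (ω s) ∂μ := by
  induction j generalizing A s B with
  | zero =>
    have hcyl : {ω : ℕ → E | ∀ i, ω (s + 1 + i) ∈ A (i + 1)} = Set.univ := by
      ext ω
      simp [hA_univ _ (Nat.succ_pos _)]
    rw [setOf_forall_coord_add_mem_eq, hcyl, Set.inter_univ, cylinderProb,
      setLIntegral_indicator_comp (measurable_pi_apply s) (hA 0)]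
    exact (setLIntegral_one _).symm
  | succ j ih =>
    have hA0 : MeasurableSet[pathSeg E 0 s] ((fun ω => ω s) ⁻¹' A 0) :=
      measurableSet_pathSeg_coord ⟨Nat.zero_le s, le_rfl⟩ (hA 0)
    have hB' : MeasurableSet[pathSeg E 0 (s + 1)] (B ∩ (fun ω => ω s) ⁻¹' A 0) :=
      pathSeg_mono (Nat.le_succ s) _ (hB.inter hA0)
    rw [setOf_forall_coord_add_mem_eq, ← Set.inter_assoc,
      ih (fun i => hA (i + 1)) (fun i hi => hA_univ _ (by omega)) hB', cylinderProb,
      setLIntegral_indicator_comp (measurable_pi_apply s) (hA 0),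
      hμ.setLIntegral_coord_add 1 (hB.inter hA0) (measurable_cylinderProb P j fun i => hA (i + 1)),
      iterKernel_one]

lemma exists_measure_inter_eq_setLIntegral (hμ : HasMarkovProperty P μ)
    [IsFiniteMeasure μ] (m : ℕ) {Δ : Set (ℕ → E)} (hΔ : MeasurableSet[pathTail E m] Δ) :
    ∃ h : E → ℝ≥0∞, Measurable h ∧
      ∀ B, MeasurableSet[pathSeg E 0 m] B → μ (B ∩ Δ) = ∫⁻ ω in B, h (ω m) ∂μ := by
  induction Δ, hΔ using MeasurableSpace.induction_on_inter
    (generateFrom_tailCylinders m).symm (isPiSystem_tailCylinders m) with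
  | empty => exact ⟨0, measurable_const, fun B _ => by simp⟩
  | basic Δ hΔ =>
    obtain ⟨A, hA, hA_univ, rfl⟩ := hΔ
    obtain ⟨j, hj⟩ := eventually_atTop.mp hA_univ
    exact ⟨cylinderProb P j A, measurable_cylinderProb P j hA,
      fun B hB => hμ.measure_inter_cylinder j hA (fun i hi => hj i hi.le) hB⟩
  | compl Δ hΔ ih =>
    obtain ⟨h, hh, hΔh⟩ := ih
    have hle : ∀ᵐ ω ∂μ, h (ω m) ≤ 1 :=
      ae_comp_le_one_of_measure_inter_eq (measurable_pi_apply m) hh fun A hA =>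
        hΔh _ (measurableSet_pathSeg_coord ⟨Nat.zero_le m, le_rfl⟩ hA)
    refine ⟨fun y => 1 - h y, measurable_const.sub hh, fun B hB => ?_⟩
    have hBΔ : μ (B ∩ Δ) + μ (B ∩ Δᶜ) = μ B := by
      rw [← Set.sdiff_eq]
      exact measure_inter_add_sdiff B (pathTail_le_pi m Δ hΔ)
    show μ (B ∩ Δᶜ) = ∫⁻ ω in B, 1 - h (ω m) ∂μ
    rw [lintegral_sub (f := fun _ => 1) (g := fun ω : ℕ → E => h (ω m))
      (hh.comp (measurable_pi_apply m)) (hΔh B hB ▸ measure_ne_top μ _) (ae_restrict_of_ae hle),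
      setLIntegral_one, ← hΔh B hB, ← hBΔ,
      ENNReal.add_sub_cancel_left (measure_ne_top μ _)]
  | iUnion f hdisj hf ih =>
    choose h hh hfh using ih
    refine ⟨fun y => ∑' i, h i y, Measurable.tsum hh, fun B hB => ?_⟩
    have hBm := pathSeg_le_pi 0 m B hB
    beta_reduce
    rw [Set.inter_iUnion, measure_iUnion (fun i j hij => (hdisj hij).mono Set.inter_subset_right
      Set.inter_subset_right) fun i => hBm.inter (pathTail_le_pi m _ (hf i)),
      lintegral_tsum (f := fun i (ω : ℕ → E) => h i (ω m))
        fun i => ((hh i).comp (measurable_pi_apply m)).aemeasurable]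
    exact tsum_congr fun i => hfh i B hB

lemma exists_le_one_measure_inter_eq_setLIntegral
    (hμ : HasMarkovProperty P μ) [IsFiniteMeasure μ] (m : ℕ) {Δ : Set (ℕ → E)}
    (hΔ : MeasurableSet[pathTail E m] Δ) :
    ∃ h : E → ℝ≥0∞, Measurable h ∧ (∀ y, h y ≤ 1) ∧
      ∀ B, MeasurableSet[pathSeg E 0 m] B → μ (B ∩ Δ) = ∫⁻ ω in B, h (ω m) ∂μ := by
  obtain ⟨h, hh, hΔh⟩ := hμ.exists_measure_inter_eq_setLIntegral m hΔ
  have hle : ∀ᵐ ω ∂μ, h (ω m) ≤ 1 :=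
    ae_comp_le_one_of_measure_inter_eq (measurable_pi_apply m) hh fun A hA =>
      hΔh _ (measurableSet_pathSeg_coord ⟨Nat.zero_le m, le_rfl⟩ hA)
  refine ⟨fun y => min (h y) 1, hh.min measurable_const, fun y => min_le_right _ _,
    fun B hB => ?_⟩
  rw [hΔh B hB]
  exact lintegral_congr_ae (ae_restrict_of_ae (hle.mono fun ω hω => (min_eq_left hω).symm))

lemma abs_measureReal_inter_sub_le [IsMarkovKernel P] [IsFiniteMeasure μ]
    (hμ : HasMarkovProperty P μ) {m n : ℕ} {Δ : Set (ℕ → E)} {h : E → ℝ≥0∞}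
    (hh : Measurable h) (hh1 : ∀ y, h y ≤ 1)
    (hΔh : ∀ B, MeasurableSet[pathSeg E 0 (m + n)] B →
      μ (B ∩ Δ) = ∫⁻ ω in B, h (ω (m + n)) ∂μ)
    {c ε : ℝ} (hc : ∀ z, |∫ y, (h y).toReal ∂(iterKernel P n z) - c| ≤ ε)
    {B : Set (ℕ → E)} (hB : MeasurableSet[pathSeg E 0 m] B) :
    |μ.real (B ∩ Δ) - c * μ.real B| ≤ ε * μ.real B := by
  set G : E → ℝ≥0∞ := fun z => ∫⁻ y, h y ∂(iterKernel P n z)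
  have hG : Measurable fun ω : ℕ → E => G (ω m) :=
    hh.lintegral_kernel.comp (measurable_pi_apply m)
  have hG_lt_top (z : E) : G z < ∞ :=
    (lintegral_mono hh1).trans_lt (by simp)
  have hG_toReal (z : E) : (G z).toReal = ∫ y, (h y).toReal ∂(iterKernel P n z) :=
    (integral_toReal hh.aemeasurable
      (ae_of_all _ fun y => (hh1 y).trans_lt ENNReal.one_lt_top)).symm
  have hBΔ : μ.real (B ∩ Δ) = ∫ ω in B, (G (ω m)).toReal ∂μ := by
    rw [measureReal_def, hΔh B (pathSeg_mono (Nat.le_add_right m n) B hB),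
      hμ.setLIntegral_coord_add n hB hh,
      integral_toReal hG.aemeasurable (ae_of_all _ fun ω => hG_lt_top _)]
  rw [hBΔ]
  exact abs_setIntegral_sub_mul_measureReal_le hG.ennreal_toReal.aestronglyMeasurable
    (fun ω => hG_toReal (ω m) ▸ hc (ω m)) B

end HasMarkovProperty

end

theorem phi_mixing_of_uniform_ergodicity_general
    {E : Type*} [MeasurableSpace E]
    (P : Kernel E E) [IsMarkovKernel P]
    (ν : Measure E) (R ρ : ℝ)
    (herg : ∀ f : E → ℝ, Measurable f → ∀ M : ℝ, (∀ y, |f y| ≤ M) →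
      ∀ n : ℕ, 1 ≤ n → ∀ x : E,
        |(∫ y, f y ∂(iterKernel P n x)) - ∫ y, f y ∂ν| ≤
          R * Real.exp (-ρ * n) * M)
    (Px : E → Measure (ℕ → E)) (hPx : ∀ x, IsProbabilityMeasure (Px x))
    (hmarkov : ∀ x : E, ∀ n : ℕ, ∀ B : Set (ℕ → E),
      MeasurableSet[pathSeg E 0 n] B → ∀ A : Set E, MeasurableSet A →
        Px x (B ∩ {ω | ω (n + 1) ∈ A}) = ∫⁻ ω in B, P (ω n) A ∂(Px x)) :
    ∀ x : E, ∀ m n : ℕ, 1 ≤ n →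
      ∀ Γ : Set (ℕ → E), MeasurableSet[pathSeg E 0 m] Γ →
      ∀ Δ : Set (ℕ → E), MeasurableSet[pathTail E (m + n)] Δ →
      Px x Γ ≠ 0 →
        |(Px x (Γ ∩ Δ)).toReal / (Px x Γ).toReal - (Px x Δ).toReal| ≤
          2 * R * Real.exp (-ρ * n) := by
  intro x m n hn Γ hΓ Δ hΔ hΓ0
  have := hPx x
  have hμ : HasMarkovProperty P (Px x) := hmarkov x
  obtain ⟨h, hh, hh1, hΔh⟩ := hμ.exists_le_one_measure_inter_eq_setLIntegral (m + n) hΔ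
  have hh_abs (y : E) : |(h y).toReal| ≤ 1 := by
    rw [abs_of_nonneg ENNReal.toReal_nonneg]
    exact ENNReal.toReal_le_of_le_ofReal zero_le_one (by simpa using hh1 y)
  have hc (z : E) : |∫ y, (h y).toReal ∂(iterKernel P n z) - ∫ y, (h y).toReal ∂ν| ≤
      R * Real.exp (-ρ * n) := by
    simpa using herg _ hh.ennreal_toReal 1 hh_abs n hn z
  have hΓΔ := hμ.abs_measureReal_inter_sub_le hh hh1 hΔh hc hΓ
  have hΔ' := hμ.abs_measureReal_inter_sub_le hh hh1 hΔh hc MeasurableSet.univ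
  rw [Set.univ_inter, probReal_univ, mul_one, mul_one] at hΔ'
  rw [mul_assoc]
  exact abs_div_sub_le_two_mul (ENNReal.toReal_pos hΓ0 (measure_ne_top _ _)) hΓΔ hΔ'

theorem phi_mixing_of_uniform_ergodicity
    {E : Type*} [MeasurableSpace E] [TopologicalSpace E] [PolishSpace E]
    [BorelSpace E]
    (P : Kernel E E) [IsMarkovKernel P]
    (ν : Measure E) [IsProbabilityMeasure ν] (R ρ : ℝ) (hR : 0 < R) (hρ : 0 < ρ)
    (herg : ∀ f : E → ℝ, Measurable f → ∀ M : ℝ, (∀ y, |f y| ≤ M) →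
      ∀ n : ℕ, 1 ≤ n → ∀ x : E,
        |(∫ y, f y ∂(iterKernel P n x)) - ∫ y, f y ∂ν| ≤
          R * Real.exp (-ρ * n) * M)
    (Px : E → Measure (ℕ → E)) (hPx : ∀ x, IsProbabilityMeasure (Px x))
    (hinit : ∀ x, (Px x).map (fun ω => ω 0) = Measure.dirac x)
    (hmarkov : ∀ x : E, ∀ n : ℕ, ∀ B : Set (ℕ → E),
      MeasurableSet[pathSeg E 0 n] B → ∀ A : Set E, MeasurableSet A →
        Px x (B ∩ {ω | ω (n + 1) ∈ A}) = ∫⁻ ω in B, P (ω n) A ∂(Px x)) :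
    ∀ x : E, ∀ m n : ℕ, 1 ≤ n →
      ∀ Γ : Set (ℕ → E), MeasurableSet[pathSeg E 0 m] Γ →
      ∀ Δ : Set (ℕ → E), MeasurableSet[pathTail E (m + n)] Δ →
      Px x Γ ≠ 0 →
        |(Px x (Γ ∩ Δ)).toReal / (Px x Γ).toReal - (Px x Δ).toReal| ≤
          2 * R * Real.exp (-ρ * n) :=
  phi_mixing_of_uniform_ergodicity_general P ν R ρ herg Px hPx hmarkov
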